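/- Let G be a finite connected C4-free Helly graph with diameter d and radius r. Let s be an arbitrary vertex, let v ∈ F(s) be a vertex most distant from s, and let (x,y) be a diametral pair of G (i.e., dist(x,y) = d). Then e(v) ≥ d − 2. Furthermore, if e(v) = d − 2, then e(v) = 2r − 3 = dist(v,x) = dist(v,y) and d = 2r − 1. In particular, if e(v) is even, then e(v) ≥ d − 1. -/

import Mathlib

open SimpleGraph

variable {V : Type*}

/-- The ball of radius `r` centered at `v`. -/
def gBall (G : SimpleGraph V) (v : V) (r : ℕ) : Set V := {u | G.dist v u ≤ r}

/-- A graph is Helly if every (nonempty) family of pairwise intersecting balls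
has a nonempty common intersection. -/
def IsHelly (G : SimpleGraph V) : Prop :=
  ∀ F : Set (V × ℕ), F.Nonempty →
    (∀ p ∈ F, ∀ q ∈ F, (gBall G p.1 p.2 ∩ gBall G q.1 q.2).Nonempty) →
    (⋂ p ∈ F, gBall G p.1 p.2).Nonempty

/-- The eccentricity of a vertex. -/
noncomputable def ecc (G : SimpleGraph V) [Fintype V] (v : V) : ℕ :=
  Finset.univ.sup (fun u => G.dist v u)

/-- The radius of a graph. -/
noncomputable def grad (G : SimpleGraph V) [Fintype V] : ℕ :=
  sInf (Set.range (ecc G))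

/-- The diameter of a graph. -/
noncomputable def gdiam (G : SimpleGraph V) [Fintype V] : ℕ :=
  Finset.univ.sup (ecc G)

/-- The center of a graph: vertices of minimum eccentricity. -/
noncomputable def gcenter (G : SimpleGraph V) [Fintype V] : Set V :=
  {v | ecc G v = grad G}

/-- Distance from a vertex to a set of vertices. -/
noncomputable def distS (G : SimpleGraph V) (v : V) (S : Set V) : ℕ :=
  sInf (G.dist v '' S)

/-- The metric projection of a vertex onto a set of vertices. -/
noncomputable def proj (G : SimpleGraph V) (v : V) (S : Set V) : Set V :=
  {s ∈ S | G.dist v s = distS G v S}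

/-- The slice `L(u,k,v)`: vertices on the metric interval from `u` to `v`
at distance `k` from `u`. -/
def gslice (G : SimpleGraph V) (u : V) (k : ℕ) (v : V) : Set V :=
  {w | G.dist u w = k ∧ G.dist u w + G.dist w v = G.dist u v}

/-- A graph is `C₄`-free if it has no induced cycle on four vertices. -/
def C4Free (G : SimpleGraph V) : Prop :=
  ¬ ∃ a b c d : V, a ≠ b ∧ a ≠ c ∧ a ≠ d ∧ b ≠ c ∧ b ≠ d ∧ c ≠ d ∧
    G.Adj a b ∧ G.Adj b c ∧ G.Adj c d ∧ G.Adj d a ∧ ¬ G.Adj a c ∧ ¬ G.Adj b d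

/-- The open neighbourhood of a set: vertices outside it with a neighbour in it. -/
def nbhdSet (G : SimpleGraph V) (C : Set V) : Set V :=
  {v | v ∉ C ∧ ∃ c ∈ C, G.Adj v c}

/-!
In a Helly graph every vertex `v` lies within `e(v) - r` of the centre `C(G)`, and
`2r - 1 ≤ d ≤ 2r`. A vertex `v` farthest from `s` is at distance at least `r` from a central
vertex close to `s`, hence `e(v) ≥ 2r - diam C(G)`.

C₄-freeness bounds `diam C(G)`. If two vertices at distance 2 both lie within `α + 1` of `u` and
within `β + 1` of `w`, the Helly property gives them common neighbours within `α` of `u` and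
within `β` of `w`; these span an induced `C₄` unless `dist(u, w) < α + β + 2`. As central vertices
at distance `n` yield central vertices at every distance `1 ≤ j ≤ n`, this makes `C(G)` a clique
when `d = 2r` and gives `diam C(G) ≤ 3` when `d = 2r - 1`. In the extremal case `e(v) = 2r - 3`,
an end `p` of a diametral pair closer to `v` than `e(v)` would yield a central vertex within
`r - 1` of `p` at distance 3 from another central vertex, which the same configuration excludes.
-/

section Helly

variable {G : SimpleGraph V}

theorem SimpleGraph.Connected.exists_dist_le_of_dist_le_add (hconn : G.Connected) {a b : V}
    {i j : ℕ} (h : G.dist a b ≤ i + j) : ∃ m, G.dist a m ≤ i ∧ G.dist m b ≤ j := by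
  obtain ⟨p, hp⟩ := hconn.exists_walk_length_eq_dist a b
  refine ⟨p.getVert i, (dist_le (p.take i)).trans ?_, (dist_le (p.drop i)).trans ?_⟩
  · rw [Walk.take_length]
    exact min_le_left _ _
  · rw [Walk.drop_length]
    omega

theorem IsHelly.exists_forall_dist_le (hH : IsHelly G) (hconn : G.Connected)
    {F : Set (V × ℕ)} (hne : F.Nonempty) (hF : ∀ p ∈ F, ∀ q ∈ F, G.dist p.1 q.1 ≤ p.2 + q.2) :
    ∃ m, ∀ p ∈ F, G.dist p.1 m ≤ p.2 := by
  obtain ⟨m, hm⟩ := hH F hne fun p hp q hq => by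
    obtain ⟨w, hpw, hwq⟩ := hconn.exists_dist_le_of_dist_le_add (hF p hp q hq)
    exact ⟨w, hpw, show G.dist q.1 w ≤ q.2 by rwa [SimpleGraph.dist_comm]⟩
  exact ⟨m, Set.mem_iInter₂.mp hm⟩

theorem forall_mem_triple_dist_le_add {a b c : V} {i j k : ℕ} (hab : G.dist a b ≤ i + j)
    (hac : G.dist a c ≤ i + k) (hbc : G.dist b c ≤ j + k) :
    ∀ p ∈ ({(a, i), (b, j), (c, k)} : Set (V × ℕ)),
      ∀ q ∈ ({(a, i), (b, j), (c, k)} : Set (V × ℕ)), G.dist p.1 q.1 ≤ p.2 + q.2 := by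
  have hba : G.dist b a ≤ j + i := by rw [SimpleGraph.dist_comm]; omega
  have hca : G.dist c a ≤ k + i := by rw [SimpleGraph.dist_comm]; omega
  have hcb : G.dist c b ≤ k + j := by rw [SimpleGraph.dist_comm]; omega
  simp only [Set.mem_insert_iff, Set.mem_singleton_iff]
  rintro p (rfl | rfl | rfl) q (rfl | rfl | rfl) <;> simp [*]

theorem IsHelly.exists_dist_le₃ (hH : IsHelly G) (hconn : G.Connected) {a b c : V}
    {i j k : ℕ} (hab : G.dist a b ≤ i + j) (hac : G.dist a c ≤ i + k)
    (hbc : G.dist b c ≤ j + k) : ∃ m, G.dist a m ≤ i ∧ G.dist b m ≤ j ∧ G.dist c m ≤ k := by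
  obtain ⟨m, hm⟩ := hH.exists_forall_dist_le hconn (Set.insert_nonempty _ _)
    (forall_mem_triple_dist_le_add hab hac hbc)
  exact ⟨m, hm (a, i) (by simp), hm (b, j) (by simp), hm (c, k) (by simp)⟩

theorem C4Free.isClique_commonNeighbors (hC4 : C4Free G) {a b : V} (hab : a ≠ b)
    (hnadj : ¬G.Adj a b) : G.IsClique (G.commonNeighbors a b) := by
  intro z hz w hw hzw
  rw [mem_commonNeighbors] at hz hw
  by_contra hnzw
  exact hC4 ⟨a, z, b, w, hz.1.ne, hab, hw.1.ne, hz.2.ne.symm, hzw, hw.2.ne, hz.1, hz.2.symm,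
    hw.2, hw.1.symm, hnadj, hnzw⟩

theorem mem_commonNeighbors_of_dist_le_one (hconn : G.Connected) {a b z : V}
    (hab : G.dist a b = 2) (haz : G.dist a z ≤ 1) (hbz : G.dist b z ≤ 1) :
    z ∈ G.commonNeighbors a b := by
  have adj_of {u : V} (huz : G.dist u z ≤ 1) (hne : u ≠ z) : G.Adj u z :=
    dist_eq_one_iff_adj.mp (le_antisymm huz (hconn.pos_dist_of_ne hne))
  refine (G.mem_commonNeighbors).mpr ⟨adj_of haz ?_, adj_of hbz ?_⟩ <;> rintro rfl
  · rw [SimpleGraph.dist_comm] at hab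
    omega
  · omega

theorem IsHelly.dist_lt_of_dist_eq_two (hH : IsHelly G) (hconn : G.Connected)
    (hC4 : C4Free G) {a b u w : V} {α β : ℕ} (hab : G.dist a b = 2)
    (hua : G.dist u a ≤ α + 1) (hub : G.dist u b ≤ α + 1)
    (hwa : G.dist w a ≤ β + 1) (hwb : G.dist w b ≤ β + 1) : G.dist u w < α + β + 2 := by
  have common_nbr {t : V} {γ : ℕ} (hta : G.dist t a ≤ γ + 1) (htb : G.dist t b ≤ γ + 1) :
      ∃ z ∈ G.commonNeighbors a b, G.dist t z ≤ γ := by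
    obtain ⟨z, haz, hbz, htz⟩ := hH.exists_dist_le₃ hconn (a := a) (b := b) (c := t) (i := 1)
      (j := 1) (k := γ) (by omega) (by rw [SimpleGraph.dist_comm]; omega)
      (by rw [SimpleGraph.dist_comm]; omega)
    exact ⟨z, mem_commonNeighbors_of_dist_le_one hconn hab haz hbz, htz⟩
  obtain ⟨z, hz, huz⟩ := common_nbr hua hub
  obtain ⟨z', hz', hwz'⟩ := common_nbr hwa hwb
  by_contra! hfar
  have hzz' : 2 ≤ G.dist z z' := by
    have h₁ : G.dist u w ≤ G.dist u z + G.dist z w := hconn.dist_triangle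
    have h₂ : G.dist z w ≤ G.dist z z' + G.dist z' w := hconn.dist_triangle
    rw [SimpleGraph.dist_comm (u := z')] at h₂
    omega
  have hne : a ≠ b := by rintro rfl; simp at hab
  have hnadj : ¬G.Adj a b := fun h => by rw [dist_eq_one_iff_adj.mpr h] at hab; simp at hab
  have hadj := hC4.isClique_commonNeighbors hne hnadj hz hz' (by rintro rfl; simp at hzz')
  rw [← dist_eq_one_iff_adj] at hadj
  omega

end Helly

section Eccentricity

variable (G : SimpleGraph V) [Fintype V]

theorem dist_le_ecc (v u : V) : G.dist v u ≤ ecc G v :=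
  Finset.le_sup (Finset.mem_univ u)

theorem dist_le_ecc' (u v : V) : G.dist u v ≤ ecc G v :=
  SimpleGraph.dist_comm.trans_le (dist_le_ecc G v u)

theorem ecc_le_iff {v : V} {n : ℕ} : ecc G v ≤ n ↔ ∀ u, G.dist v u ≤ n := by
  simp [ecc, Finset.sup_le_iff]

theorem ecc_le_gdiam (v : V) : ecc G v ≤ gdiam G :=
  Finset.le_sup (Finset.mem_univ v)

theorem dist_le_gdiam (v u : V) : G.dist v u ≤ gdiam G :=
  (dist_le_ecc G v u).trans (ecc_le_gdiam G v)

theorem grad_le_ecc (v : V) : grad G ≤ ecc G v :=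
  Nat.sInf_le ⟨v, rfl⟩

theorem mem_gcenter_iff {v : V} : v ∈ gcenter G ↔ ecc G v = grad G :=
  Iff.rfl

theorem gcenter_nonempty [Nonempty V] : (gcenter G).Nonempty :=
  Nat.sInf_mem (Set.range_nonempty (ecc G))

theorem exists_dist_eq_gdiam [Nonempty V] : ∃ x y, G.dist x y = gdiam G := by
  obtain ⟨x, -, hx⟩ := Finset.exists_mem_eq_sup Finset.univ Finset.univ_nonempty (ecc G)
  obtain ⟨y, -, hy⟩ := Finset.exists_mem_eq_sup Finset.univ Finset.univ_nonempty (G.dist x)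
  exact ⟨x, y, by rw [gdiam, hx, ← hy, ecc]⟩

variable {G}

theorem gdiam_le_two_mul_grad (hconn : G.Connected) : gdiam G ≤ 2 * grad G := by
  have : Nonempty V := hconn.nonempty
  obtain ⟨c, hc⟩ := gcenter_nonempty G
  refine Finset.sup_le fun u _ => (ecc_le_iff G).mpr fun w => ?_
  calc G.dist u w ≤ G.dist u c + G.dist c w := hconn.dist_triangle
    _ ≤ 2 * grad G := by
      have := dist_le_ecc' G u c
      have := dist_le_ecc G c w
      rw [mem_gcenter_iff] at hc
      omega

end Eccentricity

section HellyCenter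

variable {G : SimpleGraph V} [Fintype V]

/-- The Helly property applied to `S` together with all balls of radius `rad G`. -/
theorem IsHelly.exists_mem_gcenter_forall_dist_le (hH : IsHelly G) (hconn : G.Connected)
    {S : Set (V × ℕ)} (hS : ∀ p ∈ S, ∀ q ∈ S, G.dist p.1 q.1 ≤ p.2 + q.2)
    (hSr : ∀ p ∈ S, ecc G p.1 ≤ p.2 + grad G) :
    ∃ m ∈ gcenter G, ∀ p ∈ S, G.dist p.1 m ≤ p.2 := by
  have : Nonempty V := hconn.nonempty
  obtain ⟨m, hm⟩ := hH.exists_forall_dist_le hconn (F := S ∪ Set.range fun u => (u, grad G))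
    ⟨_, Or.inr ⟨Classical.arbitrary V, rfl⟩⟩ <| by
      rintro p (hp | ⟨u, rfl⟩) q (hq | ⟨w, rfl⟩)
      · exact hS p hp q hq
      · exact (dist_le_ecc G p.1 w).trans (hSr p hp)
      · exact (dist_le_ecc' G u q.1).trans ((hSr q hq).trans_eq (add_comm _ _))
      · exact ((dist_le_gdiam G u w).trans (gdiam_le_two_mul_grad hconn)).trans_eq (two_mul _)
  refine ⟨m, le_antisymm ((ecc_le_iff G).mpr fun u => ?_) (grad_le_ecc G m),
    fun p hp => hm p (Or.inl hp)⟩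
  rw [SimpleGraph.dist_comm]
  exact hm _ (Or.inr ⟨u, rfl⟩)

theorem IsHelly.exists_mem_gcenter_dist_le₃ (hH : IsHelly G) (hconn : G.Connected) {a b c : V}
    {i j k : ℕ} (hab : G.dist a b ≤ i + j) (hac : G.dist a c ≤ i + k) (hbc : G.dist b c ≤ j + k)
    (ha : ecc G a ≤ i + grad G) (hb : ecc G b ≤ j + grad G) (hc : ecc G c ≤ k + grad G) :
    ∃ m ∈ gcenter G, G.dist a m ≤ i ∧ G.dist b m ≤ j ∧ G.dist c m ≤ k := by
  obtain ⟨m, hm, hSm⟩ := hH.exists_mem_gcenter_forall_dist_le hconn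
    (forall_mem_triple_dist_le_add hab hac hbc) (by simp [ha, hb, hc])
  exact ⟨m, hm, hSm (a, i) (by simp), hSm (b, j) (by simp), hSm (c, k) (by simp)⟩

theorem IsHelly.exists_mem_gcenter_dist_le₂ (hH : IsHelly G) (hconn : G.Connected) {a b : V}
    {i j : ℕ} (hab : G.dist a b ≤ i + j) (ha : ecc G a ≤ i + grad G)
    (hb : ecc G b ≤ j + grad G) : ∃ m ∈ gcenter G, G.dist a m ≤ i ∧ G.dist b m ≤ j := by
  obtain ⟨m, hm, ham, hbm, -⟩ :=
    hH.exists_mem_gcenter_dist_le₃ hconn hab hab (by simp) ha hb hb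
  exact ⟨m, hm, ham, hbm⟩

theorem IsHelly.exists_mem_gcenter_dist_add_grad_le_ecc (hH : IsHelly G) (hconn : G.Connected)
    (v : V) : ∃ c ∈ gcenter G, G.dist v c + grad G ≤ ecc G v := by
  obtain ⟨c, hc, hvc, -⟩ := hH.exists_mem_gcenter_dist_le₂ hconn (i := ecc G v - grad G)
    (j := ecc G v - grad G) (a := v) (b := v) (by simp) (by omega) (by omega)
  exact ⟨c, hc, by have := grad_le_ecc G v; omega⟩

theorem IsHelly.exists_mem_gcenter_grad_le_dist (hH : IsHelly G) (hconn : G.Connected)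
    {s v : V} (hv : G.dist s v = ecc G s) : ∃ c ∈ gcenter G, grad G ≤ G.dist v c := by
  obtain ⟨c, hc, hsc⟩ := hH.exists_mem_gcenter_dist_add_grad_le_ecc hconn s
  have : G.dist s v ≤ G.dist s c + G.dist c v := hconn.dist_triangle
  exact ⟨c, hc, by rw [SimpleGraph.dist_comm]; omega⟩

theorem IsHelly.two_mul_grad_le_gdiam_add_one (hH : IsHelly G) (hconn : G.Connected) :
    2 * grad G ≤ gdiam G + 1 := by
  have : Nonempty V := hconn.nonempty
  by_contra! hd
  obtain ⟨m, hm⟩ := hH.exists_forall_dist_le hconn (F := Set.range fun u => (u, grad G - 1))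
    ⟨_, ⟨Classical.arbitrary V, rfl⟩⟩ <| by
      rintro - ⟨u, rfl⟩ - ⟨w, rfl⟩
      have := dist_le_gdiam G u w
      dsimp only
      omega
  have hmr : ecc G m ≤ grad G - 1 :=
    (ecc_le_iff G).mpr fun u => SimpleGraph.dist_comm.trans_le (hm _ ⟨u, rfl⟩)
  have := grad_le_ecc G m
  omega

theorem IsHelly.exists_mem_gcenter_dist_eq (hH : IsHelly G) (hconn : G.Connected) {a b : V}
    (ha : a ∈ gcenter G) (hb : b ∈ gcenter G) {j : ℕ} (hj : 1 ≤ j) (hjab : j ≤ G.dist a b) :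
    ∃ a' ∈ gcenter G, ∃ b' ∈ gcenter G, G.dist a' b' = j := by
  obtain ⟨n, hn⟩ : ∃ n, G.dist a b = n := ⟨_, rfl⟩
  rw [hn] at hjab
  induction n generalizing a b with
  | zero => omega
  | succ n ih =>
    rcases hjab.eq_or_lt with rfl | hlt
    · exact ⟨a, ha, b, hb, hn⟩
    rw [mem_gcenter_iff] at ha hb
    obtain ⟨m, hm, ham, hbm⟩ := hH.exists_mem_gcenter_dist_le₂ hconn (a := a) (b := b) (i := 1)
      (j := n) (by omega) (by omega) (by omega)
    have : G.dist a b ≤ G.dist a m + G.dist m b := hconn.dist_triangle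
    rw [SimpleGraph.dist_comm (u := m)] at this
    exact ih hb hm (by omega) (by omega)

theorem IsHelly.dist_le_one_of_mem_gcenter (hH : IsHelly G) (hconn : G.Connected) (hC4 : C4Free G)
    (hd : gdiam G = 2 * grad G) {a b : V} (ha : a ∈ gcenter G) (hb : b ∈ gcenter G) :
    G.dist a b ≤ 1 := by
  have : Nonempty V := hconn.nonempty
  by_contra! h
  obtain ⟨a', ha', b', hb', hab⟩ :=
    hH.exists_mem_gcenter_dist_eq hconn ha hb (j := 2) (by norm_num) h
  obtain ⟨x, y, hxy⟩ := exists_dist_eq_gdiam G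
  rw [mem_gcenter_iff] at ha' hb'
  have := dist_le_ecc G a' b'
  have := dist_le_ecc' G x a'
  have := dist_le_ecc' G x b'
  have := dist_le_ecc' G y a'
  have := dist_le_ecc' G y b'
  have := hH.dist_lt_of_dist_eq_two hconn hC4 (α := grad G - 1) (β := grad G - 1) hab
    (u := x) (w := y) (by omega) (by omega) (by omega) (by omega)
  omega

/-- Two Helly steps move from `a` towards `b` while staying central and within `r - 1` of `p`,
reaching a central vertex at distance 2 from `a`; this pair, `p` and the other end `q` form the
configuration excluded by `IsHelly.dist_lt_of_dist_eq_two`. -/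
theorem IsHelly.grad_le_dist_of_dist_eq_three (hH : IsHelly G) (hconn : G.Connected)
    (hC4 : C4Free G) (hd : gdiam G + 1 = 2 * grad G) {p q a b : V} (hpq : G.dist p q = gdiam G)
    (ha : a ∈ gcenter G) (hb : b ∈ gcenter G) (hab : G.dist a b = 3) : grad G ≤ G.dist p a := by
  by_contra! hpa
  rw [mem_gcenter_iff] at ha hb
  have := dist_le_ecc G a b
  have := dist_le_ecc' G p b
  have := ecc_le_gdiam G p
  obtain ⟨m, hm, hpm, ham, hbm⟩ := hH.exists_mem_gcenter_dist_le₃ hconn (a := p) (b := a)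
    (c := b) (i := grad G - 1) (j := 1) (k := 2) (by omega) (by omega) (by omega) (by omega)
    (by omega) (by omega)
  have hmb : G.dist m b = 2 := by
    have : G.dist a b ≤ G.dist a m + G.dist m b := hconn.dist_triangle
    rw [SimpleGraph.dist_comm] at hbm
    omega
  rw [mem_gcenter_iff] at hm
  obtain ⟨m', hm', hpm', hmm', hbm'⟩ := hH.exists_mem_gcenter_dist_le₃ hconn (a := p) (b := m)
    (c := b) (i := grad G - 1) (j := 1) (k := 1) (by omega) (by omega) (by omega) (by omega)
    (by omega) (by omega)
  have ham' : G.dist a m' = 2 := by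
    have : G.dist a m' ≤ G.dist a m + G.dist m m' := hconn.dist_triangle
    have : G.dist a b ≤ G.dist a m' + G.dist m' b := hconn.dist_triangle
    rw [SimpleGraph.dist_comm (u := m')] at this
    omega
  rw [mem_gcenter_iff] at hm'
  have := dist_le_ecc' G q a
  have := dist_le_ecc' G q m'
  have := hH.dist_lt_of_dist_eq_two hconn hC4 ham' (u := p) (w := q) (α := grad G - 2)
    (β := grad G - 1) (by omega) (by omega) (by omega) (by omega)
  omega

theorem IsHelly.dist_le_three_of_mem_gcenter (hH : IsHelly G) (hconn : G.Connected) (hC4 : C4Free G)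
    (hd : gdiam G + 1 = 2 * grad G) {a b : V} (ha : a ∈ gcenter G) (hb : b ∈ gcenter G) :
    G.dist a b ≤ 3 := by
  have : Nonempty V := hconn.nonempty
  by_contra! h
  obtain ⟨a', ha', b', hb', hab⟩ :=
    hH.exists_mem_gcenter_dist_eq hconn ha hb (j := 4) (by norm_num) h
  obtain ⟨x, y, hxy⟩ := exists_dist_eq_gdiam G
  rw [mem_gcenter_iff] at ha' hb'
  have := dist_le_ecc G a' b'
  have := dist_le_ecc' G x a'
  have := dist_le_ecc' G x b'
  have := ecc_le_gdiam G x
  obtain ⟨m, hm, hxm, ham, hbm⟩ := hH.exists_mem_gcenter_dist_le₃ hconn (a := x) (b := a')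
    (c := b') (i := grad G - 1) (j := 1) (k := 3) (by omega) (by omega) (by omega) (by omega)
    (by omega) (by omega)
  have hmb : G.dist m b' = 3 := by
    have : G.dist a' b' ≤ G.dist a' m + G.dist m b' := hconn.dist_triangle
    rw [SimpleGraph.dist_comm] at hbm
    omega
  have := hH.grad_le_dist_of_dist_eq_three hconn hC4 hd hxy hm hb' hmb
  omega

theorem IsHelly.dist_eq_ecc_of_dist_eq_gdiam (hH : IsHelly G) (hconn : G.Connected) (hC4 : C4Free G)
    (hd : gdiam G + 1 = 2 * grad G) {v c p q : V} (hv : ecc G v + 3 = 2 * grad G)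
    (hc : c ∈ gcenter G) (hvc : grad G ≤ G.dist v c) (hpq : G.dist p q = gdiam G) :
    G.dist v p = ecc G v := by
  refine le_antisymm (dist_le_ecc G v p) (not_lt.mp fun hvp => ?_)
  have := grad_le_ecc G v
  have := dist_le_ecc G v p
  have := ecc_le_gdiam G p
  obtain ⟨m, hm, hvm, hpm⟩ := hH.exists_mem_gcenter_dist_le₂ hconn (a := v) (b := p)
    (i := grad G - 3) (j := grad G - 1) (by omega) (by omega) (by omega)
  have : G.dist v c ≤ G.dist v m + G.dist m c := hconn.dist_triangle
  have := hH.dist_le_three_of_mem_gcenter hconn hC4 hd hm hc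
  have := hH.grad_le_dist_of_dist_eq_three hconn hC4 hd hpq hm hc (by omega)
  omega

end HellyCenter

/-- In a finite connected C4-free Helly graph with diameter `d` and
radius `r`, if `v` is a vertex most distant from an arbitrary vertex `s` and
`(x,y)` is a diametral pair, then `e(v) ≥ d − 2`; if `e(v) = d − 2` then
`e(v) = 2r − 3 = dist(v,x) = dist(v,y)` and `d = 2r − 1`; in particular
if `e(v)` is even then `e(v) ≥ d − 1`. -/
theorem stmt5 (G : SimpleGraph V) [Fintype V] (hconn : G.Connected) (hH : IsHelly G)
    (hC4 : C4Free G) (s v x y : V)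
    (hv : G.dist s v = ecc G s) (hxy : G.dist x y = gdiam G) :
    gdiam G - 2 ≤ ecc G v ∧
    (ecc G v = gdiam G - 2 →
      ecc G v = 2 * grad G - 3 ∧ ecc G v = G.dist v x ∧ ecc G v = G.dist v y ∧
        gdiam G = 2 * grad G - 1) ∧
    (Even (ecc G v) → gdiam G - 1 ≤ ecc G v) := by
  obtain ⟨c, hc, hvc⟩ := hH.exists_mem_gcenter_grad_le_dist hconn hv
  obtain ⟨c', hc', hvc'⟩ := hH.exists_mem_gcenter_dist_add_grad_le_ecc hconn v
  have : G.dist v c ≤ G.dist v c' + G.dist c' c := hconn.dist_triangle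
  have := gdiam_le_two_mul_grad hconn
  have := hH.two_mul_grad_le_gdiam_add_one hconn
  have := grad_le_ecc G v
  have := dist_le_gdiam G v x
  have := dist_le_gdiam G v y
  rcases (by omega : gdiam G = 2 * grad G ∨ gdiam G + 1 = 2 * grad G) with hd | hd
  · have := hH.dist_le_one_of_mem_gcenter hconn hC4 hd hc' hc
    exact ⟨by omega, fun _ => ⟨by omega, by omega, by omega, by omega⟩, fun _ => by omega⟩
  · have := hH.dist_le_three_of_mem_gcenter hconn hC4 hd hc' hc
    have hfar {p q : V} (hpq : G.dist p q = gdiam G) (he : ecc G v = gdiam G - 2) :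
        G.dist v p = ecc G v :=
      hH.dist_eq_ecc_of_dist_eq_gdiam hconn hC4 hd (by omega) hc hvc hpq
    refine ⟨by omega, fun he => ⟨by omega, (hfar hxy he).symm,
      (hfar (SimpleGraph.dist_comm.trans hxy) he).symm, by omega⟩, ?_⟩
    rintro ⟨k, hk⟩
    omega
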